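/- arXiv:1603.06290 — 2 statements merged into one kernel-verified Lean document; each statement's English description precedes it below -/
import Mathlib

section
/- Fix m ≥ 1 and n with n ≡ 0 (mod m+1). Let P_n(u) = Σ_w u^(ĥ(w)) over m-Dyck prefixes w of length n. Then P_n(u) = (1+u)·P_{n−1}(u), where on the right-hand side ĥ is the reduced height for paths of length n−1. -/
open scoped Classical

/-- Height of a path: `true` is an up step (+1), `false` is a down step (-m). -/
def height (m : ℕ) (w : List Bool) : ℤ :=
  (w.count true : ℤ) - (m : ℤ) * (w.count false : ℤ)

/-- An m-Dyck prefix: every prefix (including the whole path) has nonnegative height. -/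
def IsDyckPrefix (m : ℕ) (w : List Bool) : Prop :=
  ∀ k ≤ w.length, 0 ≤ height m (w.take k)

/-- Reduced height of a path of length `n = (m+1)ν + r`. -/
def reducedHeight (m r : ℕ) (w : List Bool) : ℕ :=
  ((height m w - (r : ℤ)) / ((m : ℤ) + 1)).toNat

lemma height_append_true (m : ℕ) (w : List Bool) :
    height m (w ++ [true]) = height m w + 1 := by
  simp [height, List.count_append]; ring

lemma height_append_false (m : ℕ) (w : List Bool) :
    height m (w ++ [false]) = height m w - m := by
  simp [height, List.count_append]; ring

lemma dyck_append_iff (m : ℕ) (w : List Bool) (b : Bool) :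
    IsDyckPrefix m (w ++ [b]) ↔ IsDyckPrefix m w ∧ 0 ≤ height m (w ++ [b]) := by
  constructor
  · intro h
    refine ⟨fun k hk => ?_, ?_⟩
    · have := h k (by simp; omega)
      rwa [List.take_append_of_le_length hk] at this
    · have := h (w.length + 1) (by simp)
      rwa [List.take_of_length_le (by simp)] at this
  · rintro ⟨h1, h2⟩ k hk
    rcases le_or_gt k w.length with hk' | hk'
    · rw [List.take_append_of_le_length hk']
      exact h1 k hk'
    · have : k = w.length + 1 := by simp at hk; omega
      subst this
      rwa [List.take_of_length_le (by simp)]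

lemma height_key (m : ℕ) (w : List Bool) :
    height m w + (m : ℤ) * w.length = ((m : ℤ) + 1) * w.count true := by
  have := List.count_true_add_count_false w
  have : (w.count true : ℤ) + (w.count false : ℤ) = (w.length : ℤ) := by exact_mod_cast this
  unfold height; rw [← this]; ring

/-- If `w` is a Dyck prefix of length `n'` with `(m+1) ∣ n'+1`, then its height is
`m + (m+1)k` for some `k : ℕ`. -/
lemma height_struct (m : ℕ) (w : List Bool) (hw : IsDyckPrefix m w)
    (K : ℕ) (hK : w.length + 1 = (m + 1) * K) :
    ∃ k : ℕ, height m w = (m : ℤ) + ((m : ℤ) + 1) * k := by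
  have h0 : 0 ≤ height m w := by
    have := hw w.length le_rfl
    simpa using this
  have hk := height_key m w
  set T : ℤ := (w.count true : ℤ)
  have hlen : (w.length : ℤ) + 1 = ((m : ℤ) + 1) * K := by exact_mod_cast hK
  set d : ℤ := T - (m : ℤ) * K with hd
  have heq : height m w = (m : ℤ) + ((m : ℤ) + 1) * d := by
    have : height m w = ((m:ℤ)+1) * T - (m:ℤ) * (((m:ℤ)+1) * K - 1) := by
      rw [← hlen]; linarith [hk]
    rw [this, hd]; ring
  have hd0 : 0 ≤ d := by nlinarith [heq, h0]
  exact ⟨d.toNat, by rw [heq, Int.toNat_of_nonneg hd0]⟩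

lemma reduced_eq (m k : ℕ) (w : List Bool) (hw : height m w = (m : ℤ) + ((m : ℤ) + 1) * k) :
    reducedHeight m m w = k := by
  unfold reducedHeight
  rw [hw]
  have : (m : ℤ) + ((m : ℤ) + 1) * k - (m : ℤ) = ((m : ℤ) + 1) * k := by ring
  rw [this, Int.mul_ediv_cancel_left _ (by positivity)]
  simp

lemma ofFn_snoc {n : ℕ} (g : Fin n → Bool) (b : Bool) :
    List.ofFn (Fin.snoc g b : Fin (n + 1) → Bool) = List.ofFn g ++ [b] := by
  rw [List.ofFn_succ']
  simp [List.concat_eq_append]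

theorem stmt3 (m n : ℕ) (hm : 1 ≤ m) (hn : 1 ≤ n) (hdiv : (m + 1) ∣ n) (u : ℚ) :
    (∑ f : Fin n → Bool,
        if IsDyckPrefix m (List.ofFn f) then u ^ reducedHeight m 0 (List.ofFn f) else 0)
      = (1 + u) *
        ∑ f : Fin (n - 1) → Bool,
          if IsDyckPrefix m (List.ofFn f) then u ^ reducedHeight m m (List.ofFn f) else 0 := by
  obtain ⟨n', rfl⟩ : ∃ n', n = n' + 1 := ⟨n - 1, by omega⟩
  simp only [Nat.add_sub_cancel]
  obtain ⟨K, hK⟩ := hdiv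
  have key : ∀ g : Fin n' → Bool,
      (if IsDyckPrefix m (List.ofFn (Fin.snoc g true : Fin (n'+1) → Bool)) then
          u ^ reducedHeight m 0 (List.ofFn (Fin.snoc g true : Fin (n'+1) → Bool)) else 0)
        + (if IsDyckPrefix m (List.ofFn (Fin.snoc g false : Fin (n'+1) → Bool)) then
          u ^ reducedHeight m 0 (List.ofFn (Fin.snoc g false : Fin (n'+1) → Bool)) else 0)
      = (1 + u) *
          (if IsDyckPrefix m (List.ofFn g) then u ^ reducedHeight m m (List.ofFn g) else 0) := by
    intro g
    rw [ofFn_snoc, ofFn_snoc]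
    set w := List.ofFn g with hw
    by_cases hD : IsDyckPrefix m w
    · obtain ⟨k, hk⟩ := height_struct m w hD K (by rw [hw]; simpa using hK)
      have hT : height m (w ++ [true]) = ((m : ℤ) + 1) * (k + 1) := by
        rw [height_append_true, hk]; ring
      have hF : height m (w ++ [false]) = ((m : ℤ) + 1) * k := by
        rw [height_append_false, hk]; ring
      have dT : IsDyckPrefix m (w ++ [true]) := by
        rw [dyck_append_iff]; exact ⟨hD, by rw [hT]; positivity⟩
      have dF : IsDyckPrefix m (w ++ [false]) := by
        rw [dyck_append_iff]; exact ⟨hD, by rw [hF]; positivity⟩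
      have rT : reducedHeight m 0 (w ++ [true]) = k + 1 := by
        unfold reducedHeight
        rw [hT]
        simp [Int.mul_ediv_cancel_left _ (show ((m:ℤ)+1) ≠ 0 by positivity)]
      have rF : reducedHeight m 0 (w ++ [false]) = k := by
        unfold reducedHeight
        rw [hF]
        simp [Int.mul_ediv_cancel_left _ (show ((m:ℤ)+1) ≠ 0 by positivity)]
      have rW : reducedHeight m m w = k := reduced_eq m k w hk
      rw [if_pos dT, if_pos dF, if_pos hD, rT, rF, rW]
      ring
    · have : ∀ b : Bool, ¬ IsDyckPrefix m (w ++ [b]) := by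
        intro b hb
        exact hD ((dyck_append_iff m w b).1 hb).1
      rw [if_neg (this true), if_neg (this false), if_neg hD]
      ring
  calc (∑ f : Fin (n'+1) → Bool,
        if IsDyckPrefix m (List.ofFn f) then u ^ reducedHeight m 0 (List.ofFn f) else 0)
      = ∑ p : Bool × (Fin n' → Bool),
          (if IsDyckPrefix m (List.ofFn (Fin.snoc p.2 p.1 : Fin (n'+1) → Bool)) then
            u ^ reducedHeight m 0 (List.ofFn (Fin.snoc p.2 p.1 : Fin (n'+1) → Bool)) else 0) := by
        exact (Fintype.sum_equiv (Fin.snocEquiv (fun _ => Bool)) _ _ fun p => rfl).symm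
    _ = ∑ b : Bool, ∑ g : Fin n' → Bool,
          (if IsDyckPrefix m (List.ofFn (Fin.snoc g b : Fin (n'+1) → Bool)) then
            u ^ reducedHeight m 0 (List.ofFn (Fin.snoc g b : Fin (n'+1) → Bool)) else 0) :=
        Fintype.sum_prod_type _
    _ = (1 + u) * ∑ f : Fin n' → Bool,
          if IsDyckPrefix m (List.ofFn f) then u ^ reducedHeight m m (List.ofFn f) else 0 := by
        rw [Fintype.sum_bool, ← Finset.sum_add_distrib, Finset.mul_sum]
        exact Finset.sum_congr rfl fun g _ => key g
end

section
/- Fix m ≥ 1 and n not divisible by m+1, and write n = (m+1)ν + r with 1 ≤ r ≤ m. The number of pairs (w, j) where w is an m-Łukasiewicz path of length n and j ∈ {1,…,n} is a pointed step, equals the number of pairs (v, a) where v is an m-Dyck prefix of length n with reduced height ĥ(v) = k ≥ 0 and a = (a_0,…,a_k) is a decoration, i.e. 1 ≤ a_i ≤ m for i < k and 1 ≤ a_k ≤ r. In other words, n·L_n = Σ_v r·m^(ĥ(v)) where L_n is the number of m-Łukasiewicz paths of length n and the sum runs over m-Dyck prefixes v of length n. -/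
open scoped Classical

/-- An m-Łukasiewicz path: every proper prefix has nonnegative height,
but the full path has negative height. -/
def IsLuka (m : ℕ) (w : List Bool) : Prop :=
  (∀ k < w.length, 0 ≤ height m (w.take k)) ∧ height m w < 0

/-!
Both sides equal `r * n.choose ν`. Write `D(n, h)` for the number of m-Dyck prefixes of length
`n = (m+1)d + h` ending at height `h`; the m-ballot formula `(n+1) D(n,h) = (h+1) C(n+1, d)`
follows by induction on `n` from `D(n+1, h) = D(n, h-1) + D(n, h+m)`. Deleting the final down
step of an m-Łukasiewicz path of length `n` leaves a Dyck prefix of height `r - 1`, so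
`n L_n = r C(n, ν)`. Grouping Dyck prefixes by reduced height turns `∑_v m^ĥ(v)` into
`∑_k m^k D(n, (m+1)k + r)`, which the ballot formula makes a binomial sum; shifting `r` by `m + 1`
telescopes it in `ν` to `C(n, ν)`.
-/

open Finset

section Paths

variable (m : ℕ)

@[simp] lemma height_nil : height m [] = 0 := by simp [height]

@[simp] lemma height_append (v w : List Bool) :
    height m (v ++ w) = height m v + height m w := by
  simp only [height, List.count_append]; push_cast; ring

@[simp] lemma height_singleton (b : Bool) : height m [b] = if b then 1 else -(m : ℤ) := by
  cases b <;> simp [height]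

lemma height_eq_length_sub (w : List Bool) :
    height m w = w.length - (m + 1) * w.count false := by
  rw [height, ← List.count_true_add_count_false w]; push_cast; ring

variable {m}

lemma IsDyckPrefix.height_nonneg {w : List Bool} (h : IsDyckPrefix m w) : 0 ≤ height m w := by
  simpa using h w.length le_rfl

lemma isDyckPrefix_nil : IsDyckPrefix m [] := by simp [IsDyckPrefix]

lemma isDyckPrefix_append_singleton {v : List Bool} {b : Bool} :
    IsDyckPrefix m (v ++ [b]) ↔ IsDyckPrefix m v ∧ 0 ≤ height m (v ++ [b]) := by
  refine ⟨fun h => ⟨fun k hk => ?_, h.height_nonneg⟩, fun ⟨hv, hb⟩ k hk => ?_⟩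
  · simpa [List.take_append_of_le_length hk] using h k (by simp; omega)
  · rcases Nat.lt_or_ge k (v.length + 1) with hlt | hge
    · rw [List.take_append_of_le_length (by omega)]
      exact hv k (by omega)
    · rwa [List.take_of_length_le (by simpa using hge)]

lemma isLuka_append_singleton {v : List Bool} {b : Bool} :
    IsLuka m (v ++ [b]) ↔ b = false ∧ IsDyckPrefix m v ∧ height m v < m := by
  have hprefix : (∀ k < (v ++ [b]).length, 0 ≤ height m ((v ++ [b]).take k)) ↔
      IsDyckPrefix m v := by
    refine forall_congr' fun k => ?_
    simp only [List.length_append, List.length_singleton, Nat.lt_succ_iff]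
    exact imp_congr_right fun hk => by rw [List.take_append_of_le_length hk]
  rw [IsLuka, hprefix]
  constructor
  · rintro ⟨hv, hneg⟩
    have := hv.height_nonneg
    cases b
    · exact ⟨rfl, hv, by simp at hneg; omega⟩
    · simp at hneg; omega
  · rintro ⟨rfl, hv, hlt⟩
    exact ⟨hv, by simp; omega⟩

end Paths

section Counting

noncomputable def pathCount (n : ℕ) (P : List Bool → Prop) : ℕ :=
  #{f : Fin n → Bool | P (List.ofFn f)}

lemma pathCount_zero (P : List Bool → Prop) : pathCount 0 P = if P [] then 1 else 0 := by
  by_cases h : P [] <;> simp [pathCount, h, Finset.filter_true_of_mem, Finset.filter_false_of_mem]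

lemma pathCount_succ (n : ℕ) (P : List Bool → Prop) :
    pathCount (n + 1) P =
      pathCount n (fun v => P (v ++ [true])) + pathCount n (fun v => P (v ++ [false])) := by
  simp only [pathCount, Finset.card_filter]
  rw [← (Fin.snocEquiv fun _ => Bool).sum_comp, Fintype.sum_prod_type, Fintype.sum_bool]
  simp only [Fin.snocEquiv_apply, List.ofFn_succ_last, Fin.snoc_castSucc, Fin.snoc_last]

lemma pathCount_congr {n : ℕ} {P Q : List Bool → Prop}
    (h : ∀ w : List Bool, w.length = n → (P w ↔ Q w)) : pathCount n P = pathCount n Q := by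
  unfold pathCount
  congr 1
  exact Finset.filter_congr fun f _ => h _ (List.length_ofFn)

lemma pathCount_eq_zero {n : ℕ} {P : List Bool → Prop}
    (h : ∀ w : List Bool, w.length = n → ¬ P w) : pathCount n P = 0 := by
  simpa [pathCount, Finset.filter_eq_empty_iff] using fun f => h _ List.length_ofFn

variable (m : ℕ)

noncomputable def dyckCount (n : ℕ) (h : ℤ) : ℕ :=
  pathCount n fun w => IsDyckPrefix m w ∧ height m w = h

lemma dyckCount_zero (h : ℤ) : dyckCount m 0 h = if h = 0 then 1 else 0 := by
  simp [dyckCount, pathCount_zero, isDyckPrefix_nil, eq_comm]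

lemma dyckCount_succ (n : ℕ) {h : ℤ} (hh : 0 ≤ h) :
    dyckCount m (n + 1) h = dyckCount m n (h - 1) + dyckCount m n (h + m) := by
  rw [dyckCount, pathCount_succ]
  congr 1 <;> refine pathCount_congr fun v _ => ?_ <;>
    simp only [isDyckPrefix_append_singleton, height_append, height_singleton] <;>
    simp only [Bool.false_eq_true, if_true, if_false] <;>
    exact ⟨fun ⟨⟨hv, _⟩, he⟩ => ⟨hv, by omega⟩, fun ⟨hv, he⟩ => ⟨⟨hv, by omega⟩, by omega⟩⟩

lemma dyckCount_eq_zero_of_neg (n : ℕ) {h : ℤ} (hh : h < 0) : dyckCount m n h = 0 :=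
  pathCount_eq_zero fun _ _ ⟨hw, he⟩ => by have := hw.height_nonneg; omega

lemma dyckCount_eq_zero_of_length_lt {n : ℕ} {h : ℤ} (hh : n < h) : dyckCount m n h = 0 :=
  pathCount_eq_zero fun w hw ⟨_, he⟩ => by
    have := height_eq_length_sub m w
    have : (0 : ℤ) ≤ (m + 1) * w.count false := by positivity
    omega

end Counting

lemma succ_mul_choose_add_mul_choose {m e h N : ℕ} (hN : N = (m + 1) * (e + 1) + h) :
    (N + 1) * (h * N.choose (e + 1) + (h + m + 1) * N.choose e) =
      N * ((h + 1) * (N + 1).choose (e + 1)) := by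
  have hsucc := Nat.choose_succ_right_eq N e
  rw [show N - e = m * (e + 1) + h + 1 by subst hN; ring_nf; omega] at hsucc
  rw [Nat.choose_succ_succ' N e]
  subst hN
  zify at hsucc ⊢
  linear_combination (-(m : ℤ) - 1) * hsucc

lemma succ_mul_dyckCount (m : ℕ) :
    ∀ n d h : ℕ, n = (m + 1) * d + h → (n + 1) * dyckCount m n h = (h + 1) * (n + 1).choose d := by
  intro n
  induction n with
  | zero =>
    intro d h hn
    obtain ⟨rfl, rfl⟩ : d = 0 ∧ h = 0 := by constructor <;> nlinarith
    simp [dyckCount_zero]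
  | succ n ih =>
    intro d h hn
    rw [dyckCount_succ m n (by positivity)]
    rcases d with _ | e
    · obtain rfl : h = n + 1 := by omega
      have hdiag : dyckCount m n n = 1 := by
        have := ih 0 n (by ring)
        simp only [Nat.choose_zero_right, mul_one] at this
        exact (Nat.mul_eq_left (by omega)).mp this
      have hfar : dyckCount m n ((n + 1 : ℕ) + m) = 0 :=
        dyckCount_eq_zero_of_length_lt m (by push_cast; omega)
      rw [show ((n + 1 : ℕ) : ℤ) - 1 = n by push_cast; ring, hdiag, hfar,
        Nat.choose_zero_right]
    · have hdown : (n + 1) * dyckCount m n (h - 1) = h * (n + 1).choose (e + 1) := by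
        rcases h with _ | g
        · simp [dyckCount_eq_zero_of_neg]
        · simpa using ih (e + 1) g (by omega)
      have hup : (n + 1) * dyckCount m n (h + m) = (h + m + 1) * (n + 1).choose e := by
        exact_mod_cast ih e (h + m) (by
          have : (m + 1) * (e + 1) = (m + 1) * e + m + 1 := by ring
          omega)
      apply Nat.eq_of_mul_eq_mul_left (show 0 < n + 1 by omega)
      calc (n + 1) * ((n + 1 + 1) * (dyckCount m n (h - 1) + dyckCount m n (h + m)))
          = (n + 1 + 1) * ((n + 1) * dyckCount m n (h - 1) + (n + 1) * dyckCount m n (h + m)) := by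
            ring
        _ = (n + 1 + 1) * (h * (n + 1).choose (e + 1) + (h + m + 1) * (n + 1).choose e) := by
            rw [hdown, hup]
        _ = (n + 1) * ((h + 1) * (n + 1 + 1).choose (e + 1)) :=
            succ_mul_choose_add_mul_choose (by omega)

lemma sum_range_pow_mul_choose (m : ℕ) : ∀ ν s : ℕ,
    ∑ k ∈ range (ν + 1), m ^ k * (((m + 1) * k + s + 1) * ((m + 1) * ν + s + 1).choose (ν - k)) =
      ((m + 1) * ν + s + 1) * ((m + 1) * ν + s).choose ν := by
  intro ν
  induction ν with
  | zero => simp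
  | succ ν ih =>
    intro s
    set U := (m + 1) * (ν + 1) + s
    have hshift : ∀ i, m ^ (i + 1) * (((m + 1) * (i + 1) + s + 1) * (U + 1).choose (ν + 1 - (i + 1)))
        = m * (m ^ i * (((m + 1) * i + (s + m + 1) + 1) *
            ((m + 1) * ν + (s + m + 1) + 1).choose (ν - i))) := by
      intro i
      rw [show (m + 1) * ν + (s + m + 1) = U by ring, Nat.add_sub_add_right, pow_succ]
      ring
    rw [Finset.sum_range_succ', Finset.sum_congr rfl fun i _ => hshift i, ← Finset.mul_sum, ih,
      show (m + 1) * ν + (s + m + 1) = U by ring]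
    have hsucc := Nat.choose_succ_right_eq U ν
    rw [show U - ν = m * (ν + 1) + s + 1 by simp only [U]; ring_nf; omega] at hsucc
    simp only [pow_zero, one_mul, mul_zero, zero_add, Nat.sub_zero, Nat.choose_succ_succ' U ν]
    simp only [U] at hsucc ⊢
    zify at hsucc ⊢
    linear_combination (-(m : ℤ) - 1) * hsucc

lemma sum_range_pow_mul_dyckCount {m n ν r : ℕ} (hn : n = (m + 1) * ν + r) :
    ∑ k ∈ range (ν + 1), m ^ k * dyckCount m n ((m + 1) * k + r : ℕ) = n.choose ν := by
  apply Nat.eq_of_mul_eq_mul_left (show 0 < n + 1 by omega)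
  have hterm : ∀ k ∈ range (ν + 1), (n + 1) * (m ^ k * dyckCount m n ((m + 1) * k + r : ℕ)) =
      m ^ k * (((m + 1) * k + r + 1) * (n + 1).choose (ν - k)) := by
    intro k hk
    have hsplit : n = (m + 1) * (ν - k) + ((m + 1) * k + r) := by
      rw [hn, ← add_assoc, ← mul_add, Nat.sub_add_cancel (Nat.lt_succ_iff.mp (mem_range.mp hk))]
    rw [mul_left_comm, succ_mul_dyckCount m n (ν - k) _ hsplit]
  rw [Finset.mul_sum, Finset.sum_congr rfl hterm, hn, sum_range_pow_mul_choose]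

section ReducedHeight

variable {m ν r : ℕ} {w : List Bool}

lemma height_eq_of_length (hw : w.length = (m + 1) * ν + r) :
    height m w = (m + 1) * ((ν : ℤ) - w.count false) + r := by
  rw [height_eq_length_sub, hw]; push_cast; ring

lemma IsDyckPrefix.count_false_le (hd : IsDyckPrefix m w) (hw : w.length = (m + 1) * ν + r)
    (hr : r ≤ m) : w.count false ≤ ν := by
  have hnonneg := hd.height_nonneg
  rw [height_eq_of_length hw] at hnonneg
  by_contra! hlt
  have : (m + 1) * ((ν : ℤ) - w.count false) ≤ -(m + 1) := by
    nlinarith [show (ν : ℤ) - w.count false ≤ -1 by omega]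
  omega

lemma IsDyckPrefix.reducedHeight_eq (hd : IsDyckPrefix m w) (hw : w.length = (m + 1) * ν + r)
    (hr : r ≤ m) : reducedHeight m r w = ν - w.count false := by
  rw [reducedHeight, height_eq_of_length hw, add_sub_cancel_right,
    Int.mul_ediv_cancel_left _ (by positivity)]
  have := hd.count_false_le hw hr
  omega

lemma IsDyckPrefix.reducedHeight_eq_iff (hd : IsDyckPrefix m w)
    (hw : w.length = (m + 1) * ν + r) (hr : r ≤ m) (k : ℕ) :
    reducedHeight m r w = k ↔ height m w = ((m + 1) * k + r : ℕ) := by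
  have := hd.count_false_le hw hr
  rw [hd.reducedHeight_eq hw hr, height_eq_of_length hw]
  push_cast
  constructor
  · intro hk; rw [← hk]; push_cast [this]; ring
  · intro hk
    have := mul_left_cancel₀ (show ((m : ℤ) + 1) ≠ 0 by positivity) (add_right_cancel hk)
    omega

end ReducedHeight

lemma sum_isDyckPrefix_pow_reducedHeight {m n ν r : ℕ} (hn : n = (m + 1) * ν + r) (hr : r ≤ m) :
    ∑ f : Fin n → Bool,
        (if IsDyckPrefix m (List.ofFn f) then m ^ reducedHeight m r (List.ofFn f) else 0) =
      ∑ k ∈ range (ν + 1), m ^ k * dyckCount m n ((m + 1) * k + r : ℕ) := by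
  have hlen (f : Fin n → Bool) : (List.ofFn f).length = (m + 1) * ν + r := by simp [hn]
  rw [← Finset.sum_filter, ← Finset.sum_fiberwise_of_maps_to
    (g := fun f => reducedHeight m r (List.ofFn f)) (t := range (ν + 1))]
  · refine Finset.sum_congr rfl fun k _ => ?_
    rw [Finset.filter_filter, Finset.sum_congr rfl fun f hf => by rw [(mem_filter.mp hf).2.2],
      Finset.sum_const, smul_eq_mul, mul_comm, dyckCount, pathCount]
    congr 1
    refine congrArg _ (Finset.ext fun f => ?_)
    simp only [mem_filter, mem_univ, true_and]
    exact and_congr_right fun hd => hd.reducedHeight_eq_iff (hlen f) hr k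
  · intro f hf
    have hd := (mem_filter.mp hf).2
    rw [mem_range, hd.reducedHeight_eq (hlen f) hr]
    omega

lemma card_isLuka_eq_dyckCount {m N ν s : ℕ} (hN : N = (m + 1) * ν + s) (hs : s < m) :
    Nat.card {f : Fin (N + 1) → Bool // IsLuka m (List.ofFn f)} = dyckCount m N s := by
  rw [Nat.card_eq_fintype_card, Fintype.card_subtype, ← pathCount, pathCount_succ,
    pathCount_eq_zero fun v _ h => by simp [isLuka_append_singleton] at h, zero_add, dyckCount]
  -- `height v ≡ s (mod m + 1)` and `0 ≤ height v < m` force `height v = s`.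
  refine pathCount_congr fun v hv => ?_
  rw [isLuka_append_singleton, hN] at *
  simp only [true_and]
  refine and_congr_right fun hd => ?_
  have hc := hd.count_false_le hv hs.le
  rw [height_eq_of_length hv]
  constructor
  · intro hlt
    have : (ν : ℤ) - v.count false = 0 := by nlinarith
    rw [this]; simp
  · intro h; omega

lemma mul_card_isLuka {m n ν r : ℕ} (hn : n = (m + 1) * ν + r) (hr : 1 ≤ r) (hrm : r ≤ m) :
    n * Nat.card {f : Fin n → Bool // IsLuka m (List.ofFn f)} = r * n.choose ν := by
  obtain ⟨N, rfl⟩ : ∃ N, n = N + 1 := ⟨n - 1, by omega⟩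
  obtain ⟨s, rfl⟩ : ∃ s, r = s + 1 := ⟨r - 1, by omega⟩
  rw [card_isLuka_eq_dyckCount (m := m) (ν := ν) (s := s) (by omega) (by omega),
    succ_mul_dyckCount m N ν s (by omega)]

theorem stmt5_general (m n ν r : ℕ) (hr : 1 ≤ r) (hrm : r ≤ m)
    (hdiv : n = (m + 1) * ν + r) :
    n * Nat.card {f : Fin n → Bool // IsLuka m (List.ofFn f)}
      = ∑ f : Fin n → Bool,
          if IsDyckPrefix m (List.ofFn f) then r * m ^ reducedHeight m r (List.ofFn f)
          else 0 := by
  simp only [← mul_ite_zero, ← Finset.mul_sum]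
  rw [mul_card_isLuka hdiv hr hrm, sum_isDyckPrefix_pow_reducedHeight hdiv hrm,
    sum_range_pow_mul_dyckCount hdiv]

theorem stmt5 (m n ν r : ℕ) (hm : 1 ≤ m) (hr : 1 ≤ r) (hrm : r ≤ m)
    (hdiv : n = (m + 1) * ν + r) :
    n * Nat.card {f : Fin n → Bool // IsLuka m (List.ofFn f)}
      = ∑ f : Fin n → Bool,
          if IsDyckPrefix m (List.ofFn f) then r * m ^ reducedHeight m r (List.ofFn f)
          else 0 :=
  stmt5_general m n ν r hr hrm hdiv
end
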